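/- arXiv:1312.5066 — 3 statements merged into one kernel-verified Lean document; each statement's English description precedes it below -/
import Mathlib

section
/- Let L ≥ 1, let ψ : ℝ → ℝ be a bounded measurable function supported in [0,L] satisfying ∫ t^k ψ(t) dt = 0 for all integers 0 ≤ k ≤ M−1 (M vanishing moments, M ≥ 1). For j ∈ ℕ and k ∈ ℤ set ψ_{j,k}(t) = 2^{j/2} ψ(2^j t − k) and t₀ = 2^{−j} k. Let r be a real number with 0 < 2r < M, and let F : ℝ² → ℝ be a measurable function such that there exist a constant c₀ < ∞ and a two-variable polynomial P of total degree at most ⌊2r⌋ with |F(t,s) − P(t,s)| ≤ c₀ (|t − t₀| + |s − t₀|)^{2r} for all t, s ∈ [t₀, t₀ + 2^{−j}L]. Then |∫∫ F(t,s) ψ_{j,k}(t) ψ_{j,k}(s) dt ds| ≤ c₀ (2L)^{2r} ‖ψ‖_{L¹}² · 2^{−(2r+1)j}. -/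
/-!
For fixed `t`, `s ↦ P(t, s)` is a polynomial of degree `≤ ⌊2r⌋ < M`, and the vanishing moments
of `ψ` survive the affine change of variables `s ↦ 2^j s - k`; so `ψ_{j,k}` annihilates the
polynomial part and the double integral equals `∫∫ (F - P)(t, s) ψ_{j,k}(t) ψ_{j,k}(s)`. On the
support `[t₀, t₀ + 2^{-j} L]²` of the integrand, `|F - P| ≤ c₀ (2 · 2^{-j} L)^{2r}`, and
`‖ψ_{j,k}‖₁ = 2^{-j/2} ‖ψ‖₁`.
-/

open MeasureTheory Set Function Polynomial

section Integrability

variable {X : Type*} [TopologicalSpace X] [MeasurableSpace X] {μ : Measure X}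

lemma integrable_of_abs_le_of_support_subset [IsFiniteMeasureOnCompacts μ] {f : X → ℝ}
    (hf : Measurable f) {B : ℝ} (hB : ∀ x, |f x| ≤ B) {K : Set X} (hK : IsCompact K)
    (hsupp : support f ⊆ K) : Integrable f μ :=
  (integrableOn_iff_integrable_of_support_subset hsupp).1 <|
    Measure.integrableOn_of_bounded hK.measure_lt_top.ne hf.aestronglyMeasurable
      (ae_of_all _ hB)

lemma MeasureTheory.Integrable.continuous_mul_of_support_subset [T2Space X]
    [OpensMeasurableSpace X] {f g : X → ℝ} (hg : Continuous g) (hf : Integrable f μ)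
    {K : Set X} (hK : IsCompact K)
    (hsupp : support f ⊆ K) : Integrable (fun x ↦ g x * f x) μ :=
  (integrableOn_iff_integrable_of_support_subset
    ((support_mul_subset_right _ _).trans hsupp)).1 <|
    hf.integrableOn.continuousOn_mul hg.continuousOn hK

end Integrability

lemma integral_comp_mul_sub {E : Type*} [NormedAddCommGroup E] [NormedSpace ℝ E]
    (f : ℝ → E) (a b : ℝ) : ∫ t, f (a * t - b) = |a⁻¹| • ∫ t, f t := by
  rw [Measure.integral_comp_mul_left (fun t ↦ f (t - b)), integral_sub_right_eq_self]

section Moments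

variable {φ : ℝ → ℝ} {M : ℕ}

lemma integral_eval_mul_eq_zero (hmom : ∀ m < M, ∫ t, t ^ m * φ t = 0)
    (hint : ∀ m, Integrable fun t ↦ t ^ m * φ t) {p : ℝ[X]} (hp : p.natDegree < M) :
    ∫ t, p.eval t * φ t = 0 := by
  simp_rw [eval_eq_sum_range, Finset.sum_mul, mul_assoc]
  rw [integral_finsetSum _ fun i _ ↦ (hint i).const_mul _]
  refine Finset.sum_eq_zero fun i hi ↦ ?_
  rw [integral_const_mul, hmom i (by grind), mul_zero]

lemma integral_pow_mul_comp_mul_sub_eq_zero (hmom : ∀ m < M, ∫ t, t ^ m * φ t = 0)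
    (hint : ∀ m, Integrable fun t ↦ t ^ m * φ t) {a : ℝ} (ha : a ≠ 0) (b : ℝ) {n : ℕ}
    (hn : n < M) : ∫ t, t ^ n * φ (a * t - b) = 0 := by
  set q : ℝ[X] := (C a⁻¹ * (X + C b)) ^ n
  have hq : ∀ t, t ^ n = q.eval (a * t - b) := fun t ↦ by simp [q, inv_mul_cancel_left₀ ha]
  have hdeg : q.natDegree < M := by
    refine lt_of_le_of_lt (natDegree_pow_le.trans ?_) hn
    calc n * (C a⁻¹ * (X + C b)).natDegree ≤ n * (X + C b).natDegree :=
          Nat.mul_le_mul_left _ (natDegree_C_mul_le _ _)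
      _ = n := by rw [natDegree_X_add_C, mul_one]
  simp_rw [hq]
  rw [integral_comp_mul_sub (fun u ↦ q.eval u * φ u),
    integral_eval_mul_eq_zero hmom hint hdeg, smul_zero]

lemma integral_mvPolynomial_eval_mul_eq_zero (hmom : ∀ m < M, ∫ t, t ^ m * φ t = 0)
    (hint : ∀ m, Integrable fun t ↦ t ^ m * φ t) {P : MvPolynomial (Fin 2) ℝ}
    (hP : P.totalDegree < M) (t : ℝ) : ∫ s, MvPolynomial.eval ![t, s] P * φ s = 0 := by
  set q : ℝ[X] := ∑ d ∈ P.support, C (P.coeff d * t ^ d 0) * X ^ d 1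
  have hq : ∀ s, MvPolynomial.eval ![t, s] P = q.eval s := fun s ↦ by
    simp [q, MvPolynomial.eval_eq', eval_finsetSum, Fin.prod_univ_two, mul_assoc]
  have hdeg : q.natDegree < M := by
    refine lt_of_le_of_lt (natDegree_sum_le_of_forall_le _ _ fun d hd ↦ ?_) hP
    exact (natDegree_C_mul_X_pow_le _ _).trans
      ((MvPolynomial.monomial_le_degreeOf 1 hd).trans (P.degreeOf_le_totalDegree 1))
  simp_rw [hq]
  exact integral_eval_mul_eq_zero hmom hint hdeg

end Moments

section DoubleIntegral

variable {α : Type*} [MeasurableSpace α] {μ : Measure α} {φ : α → ℝ} {S : Set α}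
  {F : α × α → ℝ} {Q : α → α → ℝ} {E : ℝ}

lemma abs_integral_mul_le_of_abs_sub_le (hφ : Integrable φ μ) (hsupp : support φ ⊆ S)
    (hF : Measurable F) (hQint : ∀ t, Integrable (fun s ↦ Q t s * φ s) μ)
    (hQ : ∀ t, ∫ s, Q t s * φ s ∂μ = 0)
    (hE : ∀ t s, t ∈ S → s ∈ S → |F (t, s) - Q t s| ≤ E) (t : α) :
    |∫ s, F (t, s) * φ t * φ s ∂μ| ≤ E * (∫ s, |φ s| ∂μ) * |φ t| := by
  by_cases ht : φ t = 0
  · simp [ht]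
  have htS : t ∈ S := hsupp ht
  have hbound : ∀ s, |(F (t, s) - Q t s) * φ s| ≤ E * |φ s| := fun s ↦ by
    by_cases hs : φ s = 0
    · simp [hs]
    · rw [abs_mul]
      exact mul_le_mul_of_nonneg_right (hE t s htS (hsupp hs)) (abs_nonneg _)
  have hdiff : Integrable (fun s ↦ (F (t, s) - Q t s) * φ s) μ := by
    refine (hφ.abs.const_mul E).mono' ?_ (ae_of_all _ hbound)
    simp_rw [sub_mul]
    exact ((hF.comp measurable_prodMk_left).aestronglyMeasurable.mul
      hφ.aestronglyMeasurable).sub (hQint t).aestronglyMeasurable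
  have hsplit :
      ∫ s, F (t, s) * φ t * φ s ∂μ = φ t * ∫ s, (F (t, s) - Q t s) * φ s ∂μ := by
    have hFint : Integrable (fun s ↦ F (t, s) * φ s) μ := by
      refine (hdiff.add (hQint t)).congr (ae_of_all _ fun s ↦ ?_)
      simp only [Pi.add_apply]
      ring
    simp_rw [sub_mul]
    rw [integral_sub hFint (hQint t), hQ, sub_zero, ← integral_const_mul]
    congr 1 with s
    ring
  calc |∫ s, F (t, s) * φ t * φ s ∂μ|
      = |φ t| * |∫ s, (F (t, s) - Q t s) * φ s ∂μ| := by rw [hsplit, abs_mul]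
    _ ≤ |φ t| * ∫ s, E * |φ s| ∂μ := by
        gcongr
        exact (abs_integral_le_integral_abs).trans
          (integral_mono hdiff.abs (hφ.abs.const_mul E) hbound)
    _ = E * (∫ s, |φ s| ∂μ) * |φ t| := by rw [integral_const_mul]; ring

lemma abs_integral_integral_mul_le_of_abs_sub_le (hφ : Integrable φ μ)
    (hsupp : support φ ⊆ S)
    (hF : Measurable F) (hQint : ∀ t, Integrable (fun s ↦ Q t s * φ s) μ)
    (hQ : ∀ t, ∫ s, Q t s * φ s ∂μ = 0)
    (hE : ∀ t s, t ∈ S → s ∈ S → |F (t, s) - Q t s| ≤ E) :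
    |∫ t, ∫ s, F (t, s) * φ t * φ s ∂μ ∂μ| ≤ E * (∫ t, |φ t| ∂μ) ^ 2 :=
  calc |∫ t, ∫ s, F (t, s) * φ t * φ s ∂μ ∂μ|
      ≤ ∫ t, E * (∫ s, |φ s| ∂μ) * |φ t| ∂μ :=
        abs_integral_le_integral_abs.trans <| integral_mono_of_nonneg (ae_of_all _ fun _ ↦
          abs_nonneg _) (hφ.abs.const_mul _) (ae_of_all _
          (abs_integral_mul_le_of_abs_sub_le hφ hsupp hF hQint hQ hE))
    _ = E * (∫ t, |φ t| ∂μ) ^ 2 := by rw [integral_const_mul]; ring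

end DoubleIntegral

section Dilation

variable {ψ : ℝ → ℝ} {a : ℝ} (c b : ℝ)

lemma support_const_mul_comp_mul_sub_subset (ha : 0 < a) {lo hi : ℝ}
    (hsupp : support ψ ⊆ Icc lo hi) :
    support (fun t ↦ c * ψ (a * t - b)) ⊆ Icc (a⁻¹ * (lo + b)) (a⁻¹ * (hi + b)) := by
  intro t ht
  obtain ⟨hlo, hhi⟩ := hsupp (support_mul_subset_right (fun _ ↦ c) _ ht)
  constructor
  · rw [inv_mul_le_iff₀ ha]; linarith
  · rw [le_inv_mul_iff₀ ha]; linarith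

lemma integral_abs_const_mul_comp_mul_sub :
    ∫ t, |c * ψ (a * t - b)| = |c| * |a⁻¹| * ∫ t, |ψ t| := by
  simp_rw [abs_mul]
  rw [integral_const_mul, integral_comp_mul_sub (fun u ↦ |ψ u|), smul_eq_mul, mul_assoc]

end Dilation

lemma abs_le_mul_two_mul_rpow_of_mem_Icc {G : ℝ → ℝ → ℝ} {x₀ δ p c : ℝ} (hδ : 0 < δ)
    (hp : 0 < p) (hG : ∀ t s, t ∈ Icc x₀ (x₀ + δ) → s ∈ Icc x₀ (x₀ + δ) →
      |G t s| ≤ c * (|t - x₀| + |s - x₀|) ^ p) :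
    ∀ t s, t ∈ Icc x₀ (x₀ + δ) → s ∈ Icc x₀ (x₀ + δ) → |G t s| ≤ c * (2 * δ) ^ p := by
  have hdist : ∀ x ∈ Icc x₀ (x₀ + δ), |x - x₀| ≤ δ := fun x hx ↦ by
    rw [abs_of_nonneg (by linarith [hx.1])]; linarith [hx.2]
  -- at the far corner the distance is `2 * δ > 0`, which forces `0 ≤ c`
  have hc : 0 ≤ c := by
    have hend : x₀ + δ ∈ Icc x₀ (x₀ + δ) := right_mem_Icc.2 (by linarith)
    refine nonneg_of_mul_nonneg_left ((abs_nonneg _).trans (hG _ _ hend hend)) ?_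
    refine Real.rpow_pos_of_pos ?_ _
    simp only [add_sub_cancel_left, abs_of_pos hδ]
    linarith
  intro t s ht hs
  exact (hG t s ht hs).trans <| mul_le_mul_of_nonneg_left (Real.rpow_le_rpow (by positivity)
    (by linarith [hdist t ht, hdist s hs]) hp.le) hc

lemma dyadic_scaling_identity (j : ℕ) (r L c N : ℝ) (hL : 0 ≤ L) :
    c * (2 * ((2 : ℝ) ^ (-(j : ℝ)) * L)) ^ (2 * r) *
        (|(2 : ℝ) ^ ((j : ℝ) / 2)| * |((2 : ℝ) ^ j)⁻¹| * N) ^ 2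
      = c * (2 * L) ^ (2 * r) * N ^ 2 * (2 : ℝ) ^ (-(2 * r + 1) * j) := by
  have hinv : ((2 : ℝ) ^ j)⁻¹ = 2 ^ (-(j : ℝ)) := by
    rw [Real.rpow_neg zero_le_two, Real.rpow_natCast]
  have hexp : (2 : ℝ) ^ (-(2 * r + 1) * j)
      = ((2 : ℝ) ^ (-(j : ℝ))) ^ (2 * r) *
          ((2 : ℝ) ^ ((j : ℝ) / 2) * 2 ^ (-(j : ℝ))) ^ 2 := by
    rw [← Real.rpow_mul zero_le_two, sq, ← Real.rpow_add two_pos, ← Real.rpow_add two_pos,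
      ← Real.rpow_add two_pos]
    ring_nf
  rw [hinv, abs_of_pos (by positivity), abs_of_pos (by positivity), hexp,
    show 2 * (2 ^ (-(j : ℝ)) * L) = 2 * L * 2 ^ (-(j : ℝ)) by ring,
    Real.mul_rpow (by positivity) (by positivity)]
  ring

theorem stmt_5_general
    (L : ℝ) (hL : 1 ≤ L)
    (ψ : ℝ → ℝ) (hψmeas : Measurable ψ) (hψbdd : ∃ B : ℝ, ∀ t, |ψ t| ≤ B)
    (hψsupp : Function.support ψ ⊆ Set.Icc 0 L)
    (M : ℕ)
    (hmom : ∀ m : ℕ, m < M → (∫ t : ℝ, t ^ m * ψ t) = 0)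
    (j : ℕ) (k : ℤ)
    (ψjk : ℝ → ℝ)
    (hψjk : ∀ t, ψjk t = 2 ^ ((j : ℝ) / 2) * ψ (2 ^ j * t - k))
    (t₀ : ℝ) (ht₀ : t₀ = (2 : ℝ) ^ (-(j : ℝ)) * k)
    (r : ℝ) (hr0 : 0 < 2 * r) (hrM : 2 * r < M)
    (F : ℝ × ℝ → ℝ) (hFmeas : Measurable F)
    (c₀ : ℝ) (P : MvPolynomial (Fin 2) ℝ) (hP : P.totalDegree ≤ ⌊2 * r⌋₊)
    (happrox : ∀ t s : ℝ, t ∈ Set.Icc t₀ (t₀ + (2 : ℝ) ^ (-(j : ℝ)) * L) →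
      s ∈ Set.Icc t₀ (t₀ + (2 : ℝ) ^ (-(j : ℝ)) * L) →
        |F (t, s) - MvPolynomial.eval ![t, s] P| ≤ c₀ * (|t - t₀| + |s - t₀|) ^ (2 * r : ℝ)) :
    |∫ t : ℝ, ∫ s : ℝ, F (t, s) * ψjk t * ψjk s|
      ≤ c₀ * (2 * L) ^ (2 * r : ℝ) * (∫ t : ℝ, |ψ t|) ^ 2 * (2 : ℝ) ^ (-(2 * r + 1) * j : ℝ) := by
  obtain ⟨B, hB⟩ := hψbdd
  have hψjk' : ψjk = fun t ↦ 2 ^ ((j : ℝ) / 2) * ψ (2 ^ j * t - k) := funext hψjk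
  set δ := (2 : ℝ) ^ (-(j : ℝ)) * L
  have ha : (0 : ℝ) < 2 ^ j := by positivity
  have hψint : Integrable ψ :=
    integrable_of_abs_le_of_support_subset hψmeas hB isCompact_Icc hψsupp
  have hint : Integrable ψjk :=
    hψjk' ▸ ((hψint.comp_sub_right _).comp_mul_left' ha.ne').const_mul _
  have hsupp : support ψjk ⊆ Icc t₀ (t₀ + δ) := by
    convert hψjk' ▸ support_const_mul_comp_mul_sub_subset _ _ ha hψsupp using 2 <;>
      simp only [δ, ht₀, Real.rpow_neg zero_le_two, Real.rpow_natCast] <;> ring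
  have hmomjk : ∀ m < M, ∫ s, s ^ m * ψjk s = 0 := fun m hm ↦ by
    simp_rw [hψjk, mul_left_comm _ (2 ^ ((j : ℝ) / 2) : ℝ)]
    have hψpow (n : ℕ) : Integrable fun t ↦ t ^ n * ψ t :=
      hψint.continuous_mul_of_support_subset (continuous_pow n) isCompact_Icc hψsupp
    rw [integral_const_mul, integral_pow_mul_comp_mul_sub_eq_zero hmom hψpow ha.ne' _ hm,
      mul_zero]
  have hQ (t : ℝ) : ∫ s, MvPolynomial.eval ![t, s] P * ψjk s = 0 :=
    integral_mvPolynomial_eval_mul_eq_zero hmomjk (fun n ↦ hint.continuous_mul_of_support_subset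
      (continuous_pow n) isCompact_Icc hsupp) (hP.trans_lt ((Nat.floor_lt hr0.le).2 hrM)) t
  have hQint (t : ℝ) : Integrable fun s ↦ MvPolynomial.eval ![t, s] P * ψjk s :=
    hint.continuous_mul_of_support_subset ((MvPolynomial.continuous_eval P).comp (by fun_prop))
      isCompact_Icc hsupp
  calc _ ≤ c₀ * (2 * δ) ^ (2 * r) * (∫ t, |ψjk t|) ^ 2 :=
        abs_integral_integral_mul_le_of_abs_sub_le hint hsupp hFmeas hQint hQ <|
          abs_le_mul_two_mul_rpow_of_mem_Icc (by positivity) hr0 happrox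
    _ = _ := by
      rw [hψjk', integral_abs_const_mul_comp_mul_sub,
        dyadic_scaling_identity j r L _ _ (by linarith)]

/-- Let `L ≥ 1` and let `ψ : ℝ → ℝ` be a bounded measurable function
supported in `[0,L]` with `M ≥ 1` vanishing moments (`∫ t^k ψ(t) dt = 0` for `0 ≤ k < M`).
For `j ∈ ℕ`, `k ∈ ℤ` set `ψ_{j,k}(t) = 2^{j/2} ψ(2^j t - k)` and `t₀ = 2^{-j} k`.
Let `0 < 2r < M` and let `F : ℝ² → ℝ` be measurable such that for some `c₀ < ∞` and some
two-variable polynomial `P` of total degree at most `⌊2r⌋`,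
`|F(t,s) - P(t,s)| ≤ c₀(|t-t₀| + |s-t₀|)^{2r}` for all `t, s ∈ [t₀, t₀ + 2^{-j}L]`.  Then
`|∫∫ F(t,s) ψ_{j,k}(t) ψ_{j,k}(s) dt ds| ≤ c₀ (2L)^{2r} ‖ψ‖₁² · 2^{-(2r+1)j}`. -/
theorem stmt_5
    (L : ℝ) (hL : 1 ≤ L)
    (ψ : ℝ → ℝ) (hψmeas : Measurable ψ) (hψbdd : ∃ B : ℝ, ∀ t, |ψ t| ≤ B)
    (hψsupp : Function.support ψ ⊆ Set.Icc 0 L)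
    (M : ℕ) (hM : 1 ≤ M)
    (hmom : ∀ m : ℕ, m < M → (∫ t : ℝ, t ^ m * ψ t) = 0)
    (j : ℕ) (k : ℤ)
    (ψjk : ℝ → ℝ)
    (hψjk : ∀ t, ψjk t = 2 ^ ((j : ℝ) / 2) * ψ (2 ^ j * t - k))
    (t₀ : ℝ) (ht₀ : t₀ = (2 : ℝ) ^ (-(j : ℝ)) * k)
    (r : ℝ) (hr0 : 0 < 2 * r) (hrM : 2 * r < M)
    (F : ℝ × ℝ → ℝ) (hFmeas : Measurable F)
    (c₀ : ℝ) (P : MvPolynomial (Fin 2) ℝ) (hP : P.totalDegree ≤ ⌊2 * r⌋₊)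
    (happrox : ∀ t s : ℝ, t ∈ Set.Icc t₀ (t₀ + (2 : ℝ) ^ (-(j : ℝ)) * L) →
      s ∈ Set.Icc t₀ (t₀ + (2 : ℝ) ^ (-(j : ℝ)) * L) →
        |F (t, s) - MvPolynomial.eval ![t, s] P| ≤ c₀ * (|t - t₀| + |s - t₀|) ^ (2 * r : ℝ)) :
    |∫ t : ℝ, ∫ s : ℝ, F (t, s) * ψjk t * ψjk s|
      ≤ c₀ * (2 * L) ^ (2 * r : ℝ) * (∫ t : ℝ, |ψ t|) ^ 2 * (2 : ℝ) ^ (-(2 * r + 1) * j : ℝ) :=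
  stmt_5_general L hL ψ hψmeas hψbdd hψsupp M hmom j k ψjk hψjk t₀ ht₀ r hr0 hrM F hFmeas c₀ P hP
    happrox
end

section
/- Let I be a nonempty finite index set. For each N ∈ I let a*_N, â_N, a_N, pen(N) be real numbers and D_N ≥ 0, and let a* be a real number. Assume that for every N ∈ I: (i) |â_N − a_N| ≤ D_N, and (ii) â_N ≥ a*_N − D_N. Let N̂ ∈ I satisfy â_{N̂} − pen(N̂) = max_{N ∈ I} (â_N − pen(N)). Then for every N ∈ I, a* − a_{N̂} ≤ (a* − a*_N) + pen(N) + D_N + (D_{N̂} − pen(N̂)). -/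
theorem stmt_10_general {I : Type*}
    (astarN ahat a pen D : I → ℝ) (astar : ℝ)
    (h1 : ∀ N, |ahat N - a N| ≤ D N)
    (h2 : ∀ N, astarN N - D N ≤ ahat N)
    (Nhat : I)
    (hNhat : ∀ N, ahat N - pen N ≤ ahat Nhat - pen Nhat) :
    ∀ N, astar - a Nhat ≤ (astar - astarN N) + pen N + D N + (D Nhat - pen Nhat) := by
  intro N
  have h_selected : astarN N - D N - pen N + pen Nhat - D Nhat ≤ a Nhat :=
    calc astarN N - D N - pen N + pen Nhat - D Nhat
        ≤ ahat N - pen N + pen Nhat - D Nhat := by linarith [h2 N]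
      _ ≤ ahat Nhat - D Nhat := by linarith [hNhat N]
      _ ≤ a Nhat := by linarith [(abs_le.mp (h1 Nhat)).2]
  linarith

/-- Deterministic core of the model-selection oracle inequality:
if, for each model `N` in a nonempty finite index set `I`, the empirical value `â N`
deviates from the true value `a N` by at most `D N ≥ 0` and satisfies
`â N ≥ a* N - D N`, and if `N̂` maximizes the penalized empirical criterion
`â N - pen N` over `I`, then for every `N`,
`a* - a N̂ ≤ (a* - a* N) + pen N + D N + (D N̂ - pen N̂)`. -/
theorem stmt_10 {I : Type*} [Fintype I] [Nonempty I]
    (astarN ahat a pen D : I → ℝ) (astar : ℝ)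
    (hD : ∀ N, 0 ≤ D N)
    (h1 : ∀ N, |ahat N - a N| ≤ D N)
    (h2 : ∀ N, astarN N - D N ≤ ahat N)
    (Nhat : I)
    (hNhat : ∀ N, ahat N - pen N ≤ ahat Nhat - pen Nhat) :
    ∀ N, astar - a Nhat ≤ (astar - astarN N) + pen N + D N + (D Nhat - pen Nhat) :=
  stmt_10_general astarN ahat a pen D astar h1 h2 Nhat hNhat
end

section
/- Let 𝒳 be a measurable space, let K ≥ 1, let 𝒳₁, …, 𝒳_K be pairwise disjoint measurable subsets of 𝒳, and let F₁, …, F_K be probability measures on 𝒳 with F_k(𝒳_k) = 1 for each k. Let ω⁺₁, …, ω⁺_K and ω⁻₁, …, ω⁻_K be nonnegative weights, each collection summing to 1, satisfying ω⁺_k·ω⁻_l ≥ ω⁺_l·ω⁻_k whenever 1 ≤ k ≤ l ≤ K. Set G = Σ_{k=1}^K ω⁺_k F_k and H = Σ_{k=1}^K ω⁻_k F_k, and define s*(x) = Σ_{k=1}^K (K−k+1)·𝟙{x ∈ 𝒳_k}. For a measurable scoring function s : 𝒳 → ℝ, with X⁻ ∼ H and X⁺ ∼ G independent, define AUC(s)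 = ℙ(s(X⁻) < s(X⁺)) + (1/2)·ℙ(s(X⁻) = s(X⁺)). Then for every measurable s : 𝒳 → ℝ, AUC(s) ≤ AUC(s*). -/
/-!
`AUC Hm G t` is bilinear in the mixtures `Hm` and `G`, so with
`A_t k l := AUC (F k) (F l) t` and `c k l := ω⁻_k ω⁺_l` one has `AUC Hm G t = ∑ k, ∑ l, c k l * A_t k l`. For probability
measures `A_t k l + A_t l k = 1`, and since `s*` ranks `𝒳_k` strictly above `𝒳_l` for
`k < l`, `A_{s*} k l = 0` there. Grouping the terms `(k, l)` and `(l, k)` with `k < l`,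
their contribution to `AUC(s)` is `c l k - (c l k - c k l) * A_s k l ≤ c l k`, which is
the contribution to `AUC(s*)`: the likelihood ratio condition is exactly `c k l ≤ c l k`.
-/

open MeasureTheory

/-- The AUC criterion: for class-conditional distributions `Hm` (negative class) and
`Gm` (positive class), and a scoring function `s`,
`AUC(s) = ℙ(s(X⁻) < s(X⁺)) + (1/2)·ℙ(s(X⁻) = s(X⁺))` where `X⁻ ∼ Hm`, `X⁺ ∼ Gm`
are independent. -/
noncomputable def AUC {𝒳 : Type*} [MeasurableSpace 𝒳] (Hm Gm : Measure 𝒳)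
    (s : 𝒳 → ℝ) : ℝ :=
  ((Hm.prod Gm) {q : 𝒳 × 𝒳 | s q.1 < s q.2}).toReal
    + (1 / 2) * ((Hm.prod Gm) {q : 𝒳 × 𝒳 | s q.1 = s q.2}).toReal

open scoped ENNReal NNReal

namespace MeasureTheory

lemma measureReal_finsetSum_apply {α ι : Type*} [MeasurableSpace α] (s : Finset ι)
    (μ : ι → Measure α) [∀ i, IsFiniteMeasure (μ i)] (S : Set α) :
    (∑ i ∈ s, μ i).real S = ∑ i ∈ s, (μ i).real S := by
  simp only [measureReal_def, Measure.coe_finsetSum, Finset.sum_apply]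
  exact ENNReal.toReal_sum fun i _ => measure_ne_top _ _

namespace Measure

variable {α β : Type*} [MeasurableSpace α] [MeasurableSpace β]

lemma sum_smul_prod_sum_smul {ι κ : Type*} [Fintype ι] [Fintype κ] (μ : ι → Measure α)
    (ν : κ → Measure β) [∀ l, SFinite (ν l)] (a : ι → ℝ≥0) (b : κ → ℝ≥0) :
    (∑ k, a k • μ k).prod (∑ l, b l • ν l) = ∑ k, ∑ l, (a k * b l) • (μ k).prod (ν l) := by
  simp_rw [← sum_fintype, prod_sum, sum_fintype, Fintype.sum_prod_type, prod_smul_left,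
    prod_smul_right, smul_smul]

end Measure

end MeasureTheory

section AUC

variable {𝒳 : Type*} [MeasurableSpace 𝒳]

lemma AUC_nonneg (μ ν : Measure 𝒳) (t : 𝒳 → ℝ) : 0 ≤ AUC μ ν t := by
  unfold AUC; positivity

lemma AUC_swap (μ ν : Measure 𝒳) [SFinite μ] [SFinite ν] {t : 𝒳 → ℝ} (ht : Measurable t) :
    AUC ν μ t =
      (μ.prod ν).real {q | t q.2 < t q.1} + 1 / 2 * (μ.prod ν).real {q | t q.1 = t q.2} := by
  have ht₁ : Measurable fun q : 𝒳 × 𝒳 => t q.1 := ht.comp measurable_fst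
  have ht₂ : Measurable fun q : 𝒳 × 𝒳 => t q.2 := ht.comp measurable_snd
  rw [AUC, ← measureReal_def, ← measureReal_def, ← Measure.prod_swap,
    map_measureReal_apply measurable_swap (measurableSet_lt ht₁ ht₂),
    map_measureReal_apply measurable_swap (measurableSet_eq_fun ht₁ ht₂)]
  simp only [Set.preimage_ofPred_eq, Prod.fst_swap, Prod.snd_swap, eq_comm]

lemma AUC_add_AUC_swap (μ ν : Measure 𝒳) [IsProbabilityMeasure μ] [IsProbabilityMeasure ν]
    {t : 𝒳 → ℝ} (ht : Measurable t) : AUC μ ν t + AUC ν μ t = 1 := by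
  have ht₁ : Measurable fun q : 𝒳 × 𝒳 => t q.1 := ht.comp measurable_fst
  have ht₂ : Measurable fun q : 𝒳 × 𝒳 => t q.2 := ht.comp measurable_snd
  have hle : (μ.prod ν).real {q | t q.1 < t q.2} + (μ.prod ν).real {q | t q.1 = t q.2}
      = (μ.prod ν).real {q | t q.1 ≤ t q.2} := by
    rw [← measureReal_union _ (measurableSet_eq_fun ht₁ ht₂)]
    · simp only [le_iff_lt_or_eq, Set.ofPred_or]
    · exact Set.disjoint_left.2 fun q h₁ h₂ => h₁.ne h₂
  have hcompl := measureReal_add_measureReal_compl (μ := μ.prod ν) (measurableSet_le ht₁ ht₂)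
  rw [Set.compl_ofPred, probReal_univ] at hcompl
  simp only [not_le] at hcompl
  rw [AUC_swap μ ν ht, AUC, ← measureReal_def, ← measureReal_def]
  linarith

lemma AUC_eq_zero_of_forall_lt {μ ν : Measure 𝒳} [SFinite ν] {t : 𝒳 → ℝ} {A B : Set 𝒳}
    (hA : ∀ᵐ x ∂μ, x ∈ A) (hB : ∀ᵐ y ∂ν, y ∈ B) (h : ∀ x ∈ A, ∀ y ∈ B, t y < t x) :
    AUC μ ν t = 0 := by
  have hlt : ∀ᵐ q ∂μ.prod ν, t q.2 < t q.1 := by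
    filter_upwards [Measure.quasiMeasurePreserving_fst.ae hA,
      Measure.quasiMeasurePreserving_snd.ae hB] with q hq₁ hq₂
    exact h _ hq₁ _ hq₂
  have hnull : ∀ S : Set (𝒳 × 𝒳), (∀ q ∈ S, t q.1 ≤ t q.2) → (μ.prod ν) S = 0 :=
    fun S hS => measure_eq_zero_iff_ae_notMem.2 <| hlt.mono fun q hq hqS => (hS q hqS).not_gt hq
  rw [AUC, hnull {q | t q.1 < t q.2} fun q hq => le_of_lt hq,
    hnull {q | t q.1 = t q.2} fun q hq => le_of_eq hq]
  simp

lemma AUC_sum_smul {ι κ : Type*} [Fintype ι] [Fintype κ] (μ : ι → Measure 𝒳)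
    (ν : κ → Measure 𝒳) [∀ k, IsFiniteMeasure (μ k)] [∀ l, IsFiniteMeasure (ν l)]
    (a : ι → ℝ≥0) (b : κ → ℝ≥0) (t : 𝒳 → ℝ) :
    AUC (∑ k, (a k : ℝ≥0∞) • μ k) (∑ l, (b l : ℝ≥0∞) • ν l) t
      = ∑ k, ∑ l, (a k * b l : ℝ) * AUC (μ k) (ν l) t := by
  simp only [AUC, ← measureReal_def, Measure.coe_nnreal_smul, Measure.sum_smul_prod_sum_smul,
    measureReal_finsetSum_apply, measureReal_nnreal_smul_apply, Finset.mul_sum,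
    ← Finset.sum_add_distrib]
  push_cast
  ring_nf

end AUC

lemma Finset.sum_indicator_apply_of_mem {α ι β : Type*} [Fintype ι] [AddCommMonoid β]
    {X : ι → Set α} (hX : Pairwise (Function.onFun Disjoint X)) (f : ι → β) {j : ι} {x : α}
    (hx : x ∈ X j) : ∑ k, (X k).indicator (fun _ => f k) x = f j := by
  rw [Finset.sum_eq_single j (fun k _ hkj => Set.indicator_of_notMem
    (fun hxk => Set.disjoint_left.1 (hX hkj) hxk hx) _) (by simp)]
  exact Set.indicator_of_mem hx _

section PairwiseComparison

variable {ι : Type*} [LinearOrder ι] {c a b : ι → ι → ℝ}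

lemma mul_add_mul_swap_le_of_lt (hc : ∀ k l, k ≤ l → c k l ≤ c l k)
    (ha : ∀ k l, a k l + a l k = 1) (ha₀ : ∀ k l, 0 ≤ a k l)
    (hb : ∀ k l, b k l + b l k = 1) (hb₀ : ∀ k l, k < l → b k l = 0) {k l : ι} (hkl : k < l) :
    c k l * a k l + c l k * a l k ≤ c k l * b k l + c l k * b l k := by
  have hb' : b l k = 1 := by linarith [hb k l, hb₀ k l hkl]
  rw [hb₀ k l hkl, hb', show a l k = 1 - a k l by linarith [ha k l]]
  nlinarith [mul_le_mul_of_nonneg_right (hc k l hkl.le) (ha₀ k l)]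

lemma mul_add_mul_swap_le (hc : ∀ k l, k ≤ l → c k l ≤ c l k)
    (ha : ∀ k l, a k l + a l k = 1) (ha₀ : ∀ k l, 0 ≤ a k l)
    (hb : ∀ k l, b k l + b l k = 1) (hb₀ : ∀ k l, k < l → b k l = 0) (k l : ι) :
    c k l * a k l + c l k * a l k ≤ c k l * b k l + c l k * b l k := by
  rcases lt_trichotomy k l with hkl | rfl | hlk
  · exact mul_add_mul_swap_le_of_lt hc ha ha₀ hb hb₀ hkl
  · have : a k k = b k k := by linarith [ha k k, hb k k]
    rw [this]
  · linarith [mul_add_mul_swap_le_of_lt hc ha ha₀ hb hb₀ hlk]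

lemma sum_sum_mul_le_of_add_swap_eq_one [Fintype ι] (hc : ∀ k l, k ≤ l → c k l ≤ c l k)
    (ha : ∀ k l, a k l + a l k = 1) (ha₀ : ∀ k l, 0 ≤ a k l)
    (hb : ∀ k l, b k l + b l k = 1) (hb₀ : ∀ k l, k < l → b k l = 0) :
    ∑ k, ∑ l, c k l * a k l ≤ ∑ k, ∑ l, c k l * b k l := by
  have hsymm : ∀ d : ι → ι → ℝ,
      2 * ∑ k, ∑ l, c k l * d k l = ∑ k, ∑ l, (c k l * d k l + c l k * d l k) := fun d => by
    rw [two_mul]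
    nth_rewrite 2 [Finset.sum_comm]
    simp only [Finset.sum_add_distrib]
  have := Finset.sum_le_sum fun k (_ : k ∈ Finset.univ) => Finset.sum_le_sum
    fun l (_ : l ∈ Finset.univ) => mul_add_mul_swap_le hc ha ha₀ hb hb₀ k l
  linarith [hsymm a, hsymm b]

end PairwiseComparison

theorem stmt_12_general {𝒳 : Type*} [MeasurableSpace 𝒳] (K : ℕ)
    (Xs : Fin K → Set 𝒳) (hXmeas : ∀ k, MeasurableSet (Xs k))
    (hdisj : Pairwise (Function.onFun Disjoint Xs))
    (F : Fin K → Measure 𝒳) (hFprob : ∀ k, IsProbabilityMeasure (F k))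
    (hFsupp : ∀ k, F k (Xs k) = 1)
    (wp wm : Fin K → NNReal)
    (hratio : ∀ k l : Fin K, k ≤ l → wp l * wm k ≤ wp k * wm l)
    (G Hm : Measure 𝒳)
    (hG : G = ∑ k, (wp k : ENNReal) • F k)
    (hH : Hm = ∑ k, (wm k : ENNReal) • F k)
    (sstar : 𝒳 → ℝ)
    (hsstar : ∀ x, sstar x = ∑ k : Fin K, Set.indicator (Xs k)
      (fun _ => ((K : ℝ) - (k : ℕ))) x)
    (s : 𝒳 → ℝ) (hs : Measurable s) :
    AUC Hm G s ≤ AUC Hm G sstar := by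
  have hsstar_meas : Measurable sstar := by
    rw [funext hsstar]
    exact Finset.measurable_sum _ fun k _ => measurable_const.indicator (hXmeas k)
  have hsstar_eq : ∀ j, ∀ x ∈ Xs j, sstar x = K - (j : ℕ) := fun j x hx =>
    (hsstar x).trans (Finset.sum_indicator_apply_of_mem hdisj _ hx)
  have hsep : ∀ k l, k < l → AUC (F k) (F l) sstar = 0 := fun k l hkl =>
    AUC_eq_zero_of_forall_lt ((mem_ae_iff_prob_eq_one (hXmeas k)).2 (hFsupp k))
      ((mem_ae_iff_prob_eq_one (hXmeas l)).2 (hFsupp l)) fun x hx y hy => by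
        rw [hsstar_eq k x hx, hsstar_eq l y hy]
        have : ((k : ℕ) : ℝ) < (l : ℕ) := by exact_mod_cast hkl
        linarith
  have hweights : ∀ k l, k ≤ l → (wm k * wp l : ℝ) ≤ wm l * wp k := fun k l hkl => by
    have := NNReal.coe_le_coe.2 (hratio k l hkl)
    push_cast at this
    linarith
  rw [hH, hG, AUC_sum_smul, AUC_sum_smul]
  exact sum_sum_mul_le_of_add_swap_eq_one hweights
    (fun k l => AUC_add_AUC_swap (F k) (F l) hs) (fun k l => AUC_nonneg (F k) (F l) s)
    (fun k l => AUC_add_AUC_swap (F k) (F l) hsstar_meas) hsep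

/-- Mixtures with disjoint supports: let `𝒳₁, …, 𝒳_K` be pairwise
disjoint measurable sets (indexed by `Fin K`, `K ≥ 1`), `F_k` probability measures with
`F_k(𝒳_k) = 1`, and nonnegative weights `ω⁺, ω⁻` each summing to `1` with nonincreasing
likelihood ratios (`ω⁺_k·ω⁻_l ≥ ω⁺_l·ω⁻_k` for `k ≤ l`).  With
`G = ∑ ω⁺_k F_k`, `H = ∑ ω⁻_k F_k` and the piecewise-constant scoring function
`s*(x) = ∑_k (K - k)·𝟙{x ∈ 𝒳_k}` (`0`-based indexing of `Fin K`, i.e. `K - k + 1` in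
`1`-based indexing), every measurable scoring function `s` satisfies
`AUC(s) ≤ AUC(s*)`. -/
theorem stmt_12 {𝒳 : Type*} [MeasurableSpace 𝒳] (K : ℕ) (hK : 1 ≤ K)
    (Xs : Fin K → Set 𝒳) (hXmeas : ∀ k, MeasurableSet (Xs k))
    (hdisj : Pairwise (Function.onFun Disjoint Xs))
    (F : Fin K → Measure 𝒳) (hFprob : ∀ k, IsProbabilityMeasure (F k))
    (hFsupp : ∀ k, F k (Xs k) = 1)
    (wp wm : Fin K → NNReal)
    (hwp : ∑ k, wp k = 1) (hwm : ∑ k, wm k = 1)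
    (hratio : ∀ k l : Fin K, k ≤ l → wp l * wm k ≤ wp k * wm l)
    (G Hm : Measure 𝒳)
    (hG : G = ∑ k, (wp k : ENNReal) • F k)
    (hH : Hm = ∑ k, (wm k : ENNReal) • F k)
    (sstar : 𝒳 → ℝ)
    (hsstar : ∀ x, sstar x = ∑ k : Fin K, Set.indicator (Xs k)
      (fun _ => ((K : ℝ) - (k : ℕ))) x)
    (s : 𝒳 → ℝ) (hs : Measurable s) :
    AUC Hm G s ≤ AUC Hm G sstar :=
  stmt_12_general K Xs hXmeas hdisj F hFprob hFsupp wp wm hratio G Hm hG hH sstar hsstar s hs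
end
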